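/- Let M be a loopless matroid on a finite ground set E and B a building set for M with |max(B)| = rank(M) − 1. Then the inclusion-maximal nested sets of B are exactly the sets max(B) ∪ {X} with X ∈ B ∖ max(B); moreover, every X ∈ B ∖ max(B) is an atom (rank-1 flat) of M. -/

import Mathlib

open Set Matroid
open scoped Matroid

variable {α : Type*}

/-- Two sets are incomparable under inclusion. -/
def Incomp (X Y : Set α) : Prop := ¬ X ⊆ Y ∧ ¬ Y ⊆ X

/-- The inclusion-maximal elements of a family of sets. -/
def maxB (B : Set (Set α)) : Set (Set α) := {X ∈ B | ∀ Y ∈ B, X ⊆ Y → X = Y}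

/-- The rank of a set in a matroid: the largest size of an independent subset. -/
noncomputable def mrank (M : Matroid α) (X : Set α) : ℕ :=
  sSup {n : ℕ | ∃ I ⊆ X, M.Indep I ∧ I.ncard = n}

/-- A matroid is loopless if every singleton of the ground set is independent. -/
def MLoopless (M : Matroid α) : Prop := ∀ e ∈ M.E, M.Indep {e}

/-- A matroid is connected if its rank function is not additive over any
separation of the ground set into two nonempty parts. -/
def MConnected (M : Matroid α) : Prop :=
  ∀ A B : Set α, A ∪ B = M.E → Disjoint A B → A.Nonempty → B.Nonempty →
    mrank M A + mrank M B ≠ mrank M M.E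

/-- A building set for a matroid `M`: a set of nonempty flats containing all nonempty
flats whose restriction is connected, and closed under joins of intersecting members. -/
def IsBuildingSet (M : Matroid α) (B : Set (Set α)) : Prop :=
  (∀ X ∈ B, M.IsFlat X ∧ X.Nonempty) ∧
  (∀ X, M.IsFlat X → X.Nonempty → MConnected (M.restrict X) → X ∈ B) ∧
  (∀ X ∈ B, ∀ Y ∈ B, (X ∩ Y).Nonempty → M.closure (X ∪ Y) ∈ B)

/-- A nested set of a building set `B`. -/
def IsNested (M : Matroid α) (B N : Set (Set α)) : Prop :=
  N ⊆ B ∧ maxB B ⊆ N ∧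
  ∀ S : Set (Set α), S ⊆ N → S.Nontrivial → S.Pairwise Incomp →
    M.closure (⋃₀ S) ∉ B

/-- An inclusion-maximal nested set. -/
def IsMaxNested (M : Matroid α) (B N : Set (Set α)) : Prop :=
  IsNested M B N ∧ ∀ N', IsNested M B N' → N ⊆ N' → N' = N

/-- An atom of a matroid: a rank-one flat. -/
def IsAtomFlat (M : Matroid α) (A : Set α) : Prop := M.IsFlat A ∧ mrank M A = 1

/-- Atoms are compared by their least elements. -/
def atomLE [Preorder α] (A A' : Set α) : Prop :=
  ∃ a a', IsLeast A a ∧ IsLeast A' a' ∧ a ≤ a'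

/-- Strict comparison of atoms by their least elements. -/
def atomLT [Preorder α] (A A' : Set α) : Prop :=
  ∃ a a', IsLeast A a ∧ IsLeast A' a' ∧ a < a'

/-- `A` is an admissible label for `X` within the family `S`:
an atom contained in `X` but in no member of `S` properly below `X`. -/
def GoodLabel (M : Matroid α) (S : Set (Set α)) (X A : Set α) : Prop :=
  IsAtomFlat M A ∧ A ⊆ X ∧ ∀ Y ∈ S, Y ⊂ X → ¬ A ⊆ Y

/-- `A` is the label `m_S(X)`: the least admissible label for `X` within `S`. -/
def IsMinLabel [Preorder α] (M : Matroid α) (S : Set (Set α)) (X A : Set α) : Prop :=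
  GoodLabel M S X A ∧ ∀ A', GoodLabel M S X A' → atomLE A A'

/-- `NLListing M N R L` : `L` is the NL-listing of the remaining family `R`
(labels computed with respect to the whole family `N`), obtained by repeatedly
plucking the inclusion-minimal member with least label. -/
inductive NLListing [Preorder α] (M : Matroid α) (N : Set (Set α)) :
    Set (Set α) → List (Set α × Set α) → Prop
  | nil : NLListing M N ∅ []
  | cons {R : Set (Set α)} {X A : Set α} {L : List (Set α × Set α)} :
      X ∈ R →
      (∀ Y ∈ R, Y ⊆ X → Y = X) →
      IsMinLabel M N X A →
      (∀ Y ∈ R, (∀ W ∈ R, W ⊆ Y → W = Y) → ∀ A', IsMinLabel M N Y A' → atomLE A A') →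
      NLListing M N (R \ {X}) L →
      NLListing M N R ((X, A) :: L)

/-- A descent of a list of atoms at position `i`. -/
def HasDescentAt [Preorder α] (L : List (Set α)) (i : ℕ) : Prop :=
  ∃ h : i + 1 < L.length, atomLT (L.get ⟨i + 1, h⟩) (L.get ⟨i, Nat.lt_of_succ_lt h⟩)

/-- The indicator vector of a set. -/
noncomputable def indVec (X : Set α) : α → ℝ := X.indicator 1

/-- `v` is the vertex of the nested set `N` for the weight vector `c`. -/
def IsVertex (M : Matroid α) (B : Set (Set α)) (c : Set α → ℝ) (N : Set (Set α))
    (v : α → ℝ) : Prop :=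
  (∀ X ∈ N, ∑ᶠ a ∈ X, v a = c X) ∧
  ∃ lam mu : Set α → ℝ,
    (∀ X ∈ N \ maxB B, 0 < lam X) ∧
    v = (∑ᶠ X ∈ N \ maxB B, lam X • indVec X) + ∑ᶠ Y ∈ maxB B, mu Y • indVec Y

/-- `c` is cubical: every nested set has a unique vertex. -/
def IsCubical (M : Matroid α) (B : Set (Set α)) (c : Set α → ℝ) : Prop :=
  ∀ N, IsNested M B N → ∃! v, IsVertex M B c N v

/-- Lexicographic comparison of vectors in `ℝ^E`. -/
def lexLt [LinearOrder α] (u v : α → ℝ) : Prop :=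
  ∃ i, u i < v i ∧ ∀ j, j < i → u j = v j

open Classical in
/-- The map `τ_Z`. -/
noncomputable def tau (M : Matroid α) (Z X : Set α) : Set α :=
  if X ⊆ Z then X else M.closure (X ∪ Z) \ Z

/-- `MZ` is the contraction `M ／ Z`. -/
def IsContraction (M MZ : Matroid α) (Z : Set α) : Prop :=
  MZ.E = M.E \ Z ∧
  ∀ I : Set α, MZ.Indep I ↔ I ⊆ M.E \ Z ∧ ∃ J, M.IsBasis J Z ∧ M.Indep (I ∪ J)

section RankAux

variable [Fintype α] {M : Matroid α} {I J X Y F G P Q A A' : Set α} {e : α}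

lemma mrank_eq_ncard_of_basis' (hI : M.IsBasis' I X) : mrank M X = I.ncard := by
  have hub : ∀ n ∈ {n : ℕ | ∃ J ⊆ X, M.Indep J ∧ J.ncard = n}, n ≤ I.ncard := by
    rintro n ⟨J, hJX, hJ, rfl⟩
    obtain ⟨J', hJ', hJJ'⟩ := hJ.subset_isBasis'_of_subset hJX
    have h1 : J'.ncard = I.ncard :=
      (isBase_restrict_iff'.mpr hJ').ncard_eq_ncard_of_isBase (isBase_restrict_iff'.mpr hI)
    exact h1 ▸ ncard_le_ncard hJJ' (Set.toFinite _)
  exact IsGreatest.csSup_eq ⟨⟨I, hI.subset, hI.indep, rfl⟩, hub⟩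

lemma ncard_le_mrank (hJX : J ⊆ X) (hJ : M.Indep J) : J.ncard ≤ mrank M X := by
  obtain ⟨I, hI⟩ := M.exists_isBasis' X
  rw [mrank_eq_ncard_of_basis' hI]
  obtain ⟨J', hJ', hJJ'⟩ := hJ.subset_isBasis'_of_subset hJX
  have h1 : J'.ncard = I.ncard :=
    (isBase_restrict_iff'.mpr hJ').ncard_eq_ncard_of_isBase (isBase_restrict_iff'.mpr hI)
  exact (ncard_le_ncard hJJ' (Set.toFinite _)).trans h1.le

lemma Matroid.Indep.mrank_self (hI : M.Indep I) : mrank M I = I.ncard :=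
  mrank_eq_ncard_of_basis' hI.isBasis_self.isBasis'

lemma mrank_empty (M : Matroid α) : mrank M (∅ : Set α) = 0 := by
  rw [M.empty_indep.mrank_self, ncard_empty]

lemma mrank_mono (hXY : X ⊆ Y) : mrank M X ≤ mrank M Y := by
  obtain ⟨I, hI⟩ := M.exists_isBasis' X
  rw [mrank_eq_ncard_of_basis' hI]
  exact ncard_le_mrank (hI.subset.trans hXY) hI.indep

lemma mrank_closure_eq (M : Matroid α) (X : Set α) : mrank M (M.closure X) = mrank M X := by
  obtain ⟨I, hI⟩ := M.exists_isBasis' X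
  rw [mrank_eq_ncard_of_basis' hI,
    mrank_eq_ncard_of_basis' hI.isBasis_closure_right.isBasis']

lemma mrank_union_le (M : Matroid α) (X Y : Set α) :
    mrank M (X ∪ Y) ≤ mrank M X + mrank M Y := by
  obtain ⟨I, hI⟩ := M.exists_isBasis' (X ∪ Y)
  rw [mrank_eq_ncard_of_basis' hI]
  have hu := ncard_union_le (I ∩ X) (I \ X)
  rw [inter_union_diff] at hu
  refine hu.trans (add_le_add
    (ncard_le_mrank inter_subset_right (hI.indep.subset inter_subset_left))
    (ncard_le_mrank ?_ (hI.indep.subset diff_subset)))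
  rintro x ⟨hx, hxX⟩
  exact (hI.subset hx).resolve_left hxX

lemma mrank_submod (M : Matroid α) (U V : Set α) :
    mrank M (U ∪ V) + mrank M (U ∩ V) ≤ mrank M U + mrank M V := by
  obtain ⟨I, hI⟩ := M.exists_isBasis' (U ∩ V)
  obtain ⟨J, hJ, hIJ⟩ := hI.indep.subset_isBasis'_of_subset
    (hI.subset.trans (inter_subset_left.trans subset_union_left))
  rw [mrank_eq_ncard_of_basis' hJ, mrank_eq_ncard_of_basis' hI]
  have h1 : (J ∩ U).ncard + (J ∩ V).ncard
      = ((J ∩ U) ∪ (J ∩ V)).ncard + ((J ∩ U) ∩ (J ∩ V)).ncard :=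
    (ncard_union_add_ncard_inter _ _).symm
  have h2 : (J ∩ U) ∪ (J ∩ V) = J := by
    rw [← inter_union_distrib_left]; exact inter_eq_self_of_subset_left hJ.subset
  have h4 : I.ncard ≤ ((J ∩ U) ∩ (J ∩ V)).ncard := by
    refine ncard_le_ncard ?_ (Set.toFinite _)
    exact subset_inter (subset_inter hIJ (hI.subset.trans inter_subset_left))
      (subset_inter hIJ (hI.subset.trans inter_subset_right))
  have h5 : (J ∩ U).ncard ≤ mrank M U :=
    ncard_le_mrank inter_subset_right (hJ.indep.subset inter_subset_left)
  have h6 : (J ∩ V).ncard ≤ mrank M V :=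
    ncard_le_mrank inter_subset_right (hJ.indep.subset inter_subset_left)
  rw [h2] at h1
  omega

lemma flat_closure (M : Matroid α) (X : Set α) : M.IsFlat (M.closure X) := by
  refine ⟨fun I Y hI hIY => hIY.subset_closure.trans ?_, M.closure_subset_ground X⟩
  rw [hI.closure_eq_closure, closure_closure]

lemma one_le_mrank (hM : MLoopless M) (heX : e ∈ X) (hX : X ⊆ M.E) : 1 ≤ mrank M X := by
  have := ncard_le_mrank (singleton_subset_iff.mpr heX) (hM e (hX heX))
  simpa using this

lemma one_le_mrank_nonempty (hM : MLoopless M) (hne : X.Nonempty) (hX : X ⊆ M.E) :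
    1 ≤ mrank M X := by
  obtain ⟨e, he⟩ := hne
  exact one_le_mrank hM he hX

lemma flat_eq_of_subset_of_mrank_le (hF : M.IsFlat F) (hG : M.IsFlat G) (hFG : F ⊆ G)
    (h : mrank M G ≤ mrank M F) : F = G := by
  obtain ⟨I, hI⟩ := M.exists_isBasis' F
  obtain ⟨J, hJ, hIJ⟩ := hI.indep.subset_isBasis'_of_subset (hI.subset.trans hFG)
  have hIJcard : J.ncard ≤ I.ncard := by
    rw [← mrank_eq_ncard_of_basis' hI, ← mrank_eq_ncard_of_basis' hJ]; exact h
  have hEq : I = J := eq_of_subset_of_ncard_le hIJ hIJcard (Set.toFinite _)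
  refine subset_antisymm hFG ?_
  have h1 : G ⊆ M.closure J := by
    rw [hJ.closure_eq_closure]
    exact M.subset_closure G hG.subset_ground
  rw [← hEq, hI.closure_eq_closure, hF.closure] at h1
  exact h1

lemma mrank_closure_singleton (hM : MLoopless M) (he : e ∈ M.E) :
    mrank M (M.closure {e}) = 1 := by
  rw [mrank_closure_eq, (hM e he).mrank_self, ncard_singleton]

lemma isAtomFlat_closure_singleton (hM : MLoopless M) (he : e ∈ M.E) :
    IsAtomFlat M (M.closure {e}) :=
  ⟨flat_closure M _, mrank_closure_singleton hM he⟩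

lemma IsAtomFlat.nonempty (hA : IsAtomFlat M A) : A.Nonempty := by
  rw [nonempty_iff_ne_empty]
  rintro rfl
  have h2 := hA.2
  rw [mrank_empty] at h2
  exact one_ne_zero h2.symm

lemma IsAtomFlat.eq_closure_singleton (hM : MLoopless M) (hA : IsAtomFlat M A) (he : e ∈ A) :
    A = M.closure {e} := by
  have heE : e ∈ M.E := hA.1.subset_ground he
  refine (flat_eq_of_subset_of_mrank_le (flat_closure M _) hA.1 ?_ ?_).symm
  · have := M.closure_subset_closure (singleton_subset_iff.mpr he)
    rwa [hA.1.closure] at this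
  · rw [hA.2, mrank_closure_singleton hM heE]

lemma IsAtomFlat.disjoint_of_ne (hM : MLoopless M) (hA : IsAtomFlat M A)
    (hA' : IsAtomFlat M A') (hne : A ≠ A') : Disjoint A A' := by
  rw [Set.disjoint_iff_inter_eq_empty, ← not_nonempty_iff_eq_empty]
  rintro ⟨e, heA, heA'⟩
  exact hne ((hA.eq_closure_singleton hM heA).trans (hA'.eq_closure_singleton hM heA').symm)

lemma mrank_restrict_of_subset (hXF : X ⊆ F) : mrank (M.restrict F) X = mrank M X := by
  unfold mrank
  congr 1
  ext n
  constructor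
  · rintro ⟨I, hIX, hI, rfl⟩
    exact ⟨I, hIX, (restrict_indep_iff.mp hI).1, rfl⟩
  · rintro ⟨I, hIX, hI, rfl⟩
    exact ⟨I, hIX, restrict_indep_iff.mpr ⟨hI, hIX.trans hXF⟩, rfl⟩

lemma mconnected_restrict_iff :
    MConnected (M.restrict F) ↔ ∀ P Q : Set α, P ∪ Q = F → Disjoint P Q → P.Nonempty →
      Q.Nonempty → mrank M P + mrank M Q ≠ mrank M F := by
  unfold MConnected
  rw [restrict_ground_eq]
  constructor
  · intro h P Q hPQ hd hP hQ
    have := h P Q hPQ hd hP hQ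
    rwa [mrank_restrict_of_subset (hPQ ▸ subset_union_left),
      mrank_restrict_of_subset (hPQ ▸ subset_union_right),
      mrank_restrict_of_subset (Subset.refl F)] at this
  · intro h P Q hPQ hd hP hQ
    rw [mrank_restrict_of_subset (hPQ ▸ subset_union_left),
      mrank_restrict_of_subset (hPQ ▸ subset_union_right),
      mrank_restrict_of_subset (Subset.refl F)]
    exact h P Q hPQ hd hP hQ

lemma IsAtomFlat.mconnected (hM : MLoopless M) (hA : IsAtomFlat M A) :
    MConnected (M.restrict A) := by
  rw [mconnected_restrict_iff]
  intro P Q hPQ _ hP hQ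
  have hPE : P ⊆ M.E := (hPQ ▸ subset_union_left (s := P) (t := Q)).trans hA.1.subset_ground
  have hQE : Q ⊆ M.E := (hPQ ▸ subset_union_right (s := P) (t := Q)).trans hA.1.subset_ground
  have h1 := one_le_mrank_nonempty hM hP hPE
  have h2 := one_le_mrank_nonempty hM hQ hQE
  rw [hA.2]
  omega

lemma sep_subset_add (hsep : mrank M P + mrank M Q ≤ mrank M (P ∪ Q)) (hdisj : Disjoint P Q)
    (hX : X ⊆ P) (hY : Y ⊆ Q) : mrank M X + mrank M Y ≤ mrank M (X ∪ Y) := by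
  have h1 := mrank_submod M (X ∪ Q) P
  have e1 : (X ∪ Q) ∪ P = P ∪ Q := by
    rw [union_right_comm, union_eq_self_of_subset_left hX, union_comm]
  have e2 : (X ∪ Q) ∩ P = X := by
    rw [union_inter_distrib_right, inter_eq_self_of_subset_left hX,
      (hdisj.symm).inter_eq, union_empty]
  have h2 := mrank_submod M (X ∪ Y) Q
  have e3 : (X ∪ Y) ∪ Q = X ∪ Q := by
    rw [union_assoc, union_eq_self_of_subset_left hY]
  have e4 : (X ∪ Y) ∩ Q = Y := by
    rw [union_inter_distrib_right, inter_eq_self_of_subset_left hY,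
      (hdisj.mono_left hX).inter_eq, empty_union]
  rw [e1, e2] at h1
  rw [e3, e4] at h2
  omega

end RankAux

section PairSep

set_option linter.unusedSectionVars false

variable [Fintype α] {M : Matroid α} {A B C D F G P Q X Y : Set α} {e : α}

lemma exists_conn_flat (hM : MLoopless M) (hdisj : Disjoint A B)
    (hlt : mrank M (A ∪ B) < mrank M A + mrank M B) :
    ∃ F, M.IsFlat F ∧ F.Nonempty ∧ MConnected (M.restrict F) ∧
      (F ∩ A).Nonempty ∧ (F ∩ B).Nonempty := by
  obtain ⟨I, hI⟩ := M.exists_isBasis' A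
  obtain ⟨J, hJ⟩ := M.exists_isBasis' B
  have hIJdisj : Disjoint I J := hdisj.mono hI.subset hJ.subset
  have hKdep : ¬ M.Indep (I ∪ J) := by
    intro h
    have h2 := ncard_le_mrank (union_subset_union hI.subset hJ.subset) h
    rw [ncard_union_eq hIJdisj, ← mrank_eq_ncard_of_basis' hI,
      ← mrank_eq_ncard_of_basis' hJ] at h2
    omega
  obtain ⟨C, ⟨hCK, hCdep⟩, hCmin⟩ := Set.Finite.exists_minimalFor id
    {D | D ⊆ I ∪ J ∧ ¬ M.Indep D} (Set.toFinite _) ⟨I ∪ J, Subset.rfl, hKdep⟩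
  have hCE : C ⊆ M.E :=
    hCK.trans (union_subset hI.indep.subset_ground hJ.indep.subset_ground)
  have hproper : ∀ D, D ⊂ C → M.Indep D := by
    intro D hD
    by_contra hDdep
    exact hD.2 (hCmin ⟨hD.subset.trans hCK, hDdep⟩ hD.subset)
  have hCne : C.Nonempty := by
    rw [nonempty_iff_ne_empty]; rintro rfl; exact hCdep M.empty_indep
  have hCA : (C ∩ A).Nonempty := by
    rw [nonempty_iff_ne_empty]
    intro h0
    have hCJ : C ⊆ J := by
      intro x hx
      rcases hCK hx with hxI | hxJ
      · exact absurd (eq_empty_iff_forall_notMem.mp h0 x) (by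
          exact fun h => h ⟨hx, hI.subset hxI⟩)
      · exact hxJ
    exact hCdep (hJ.indep.subset hCJ)
  have hCB : (C ∩ B).Nonempty := by
    rw [nonempty_iff_ne_empty]
    intro h0
    have hCI : C ⊆ I := by
      intro x hx
      rcases hCK hx with hxI | hxJ
      · exact hxI
      · exact absurd (eq_empty_iff_forall_notMem.mp h0 x) (by
          exact fun h => h ⟨hx, hJ.subset hxJ⟩)
    exact hCdep (hI.indep.subset hCI)
  have hCbasis : ∀ e ∈ C, M.IsBasis (C \ {e}) C := by
    intro e he
    have hind : M.Indep (C \ {e}) := hproper _ (sdiff_singleton_ssubset.mpr he)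
    refine hind.isBasis_of_subset_of_subset_closure diff_subset ?_
    intro x hx
    rcases eq_or_ne x e with rfl | hne
    · have hdep : M.Dep (insert x (C \ {x})) := by
        rw [insert_diff_singleton, insert_eq_of_mem hx]
        exact ⟨hCdep, hCE⟩
      exact (hind.insert_dep_iff.mp hdep).1
    · exact M.subset_closure _ (diff_subset.trans hCE) ⟨hx, hne⟩
  obtain ⟨e, he⟩ := hCne
  have hrC : mrank M C + 1 = C.ncard := by
    rw [mrank_eq_ncard_of_basis' (hCbasis e he).isBasis',
      ncard_diff_singleton_add_one he]
  have hsubcl := M.subset_closure C hCE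
  refine ⟨M.closure C, flat_closure M C, ⟨e, hsubcl he⟩, ?_,
    hCA.mono (inter_subset_inter_left A hsubcl),
    hCB.mono (inter_subset_inter_left B hsubcl)⟩
  rw [mconnected_restrict_iff]
  intro P Q hPQ hdisjPQ hP hQ hsum
  have hPE : P ⊆ M.E := (hPQ ▸ subset_union_left (s := P) (t := Q)).trans
    (M.closure_subset_ground C)
  have hQE : Q ⊆ M.E := (hPQ ▸ subset_union_right (s := P) (t := Q)).trans
    (M.closure_subset_ground C)
  have hrF : mrank M (M.closure C) = mrank M C := mrank_closure_eq M C
  rw [hrF] at hsum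
  have hCsub : C ⊆ P ∪ Q := hPQ ▸ hsubcl
  have hCP : (C ∩ P).Nonempty := by
    rw [nonempty_iff_ne_empty]
    intro h0
    have hCQ : C ⊆ Q := fun x hx => (hCsub hx).resolve_left
      (fun hxP => eq_empty_iff_forall_notMem.mp h0 x ⟨hx, hxP⟩)
    have h1 : mrank M C ≤ mrank M Q := mrank_mono hCQ
    have h2 : 1 ≤ mrank M P := one_le_mrank_nonempty hM hP hPE
    omega
  have hCQ : (C ∩ Q).Nonempty := by
    rw [nonempty_iff_ne_empty]
    intro h0
    have hCP' : C ⊆ P := fun x hx => (hCsub hx).resolve_right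
      (fun hxQ => eq_empty_iff_forall_notMem.mp h0 x ⟨hx, hxQ⟩)
    have h1 : mrank M C ≤ mrank M P := mrank_mono hCP'
    have h2 : 1 ≤ mrank M Q := one_le_mrank_nonempty hM hQ hQE
    omega
  have hadd : mrank M (C ∩ P) + mrank M (C ∩ Q) ≤ mrank M ((C ∩ P) ∪ (C ∩ Q)) := by
    refine sep_subset_add ?_ hdisjPQ inter_subset_right inter_subset_right
    rw [hPQ, hrF]
    exact hsum.le
  have hunion : (C ∩ P) ∪ (C ∩ Q) = C := by
    rw [← inter_union_distrib_left]
    exact inter_eq_self_of_subset_left hCsub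
  have hCPprop : C ∩ P ⊂ C := by
    refine ⟨inter_subset_left, fun hsub => ?_⟩
    obtain ⟨x, hxC, hxQ⟩ := hCQ
    exact Set.disjoint_left.mp hdisjPQ (hsub hxC).2 hxQ
  have hCQprop : C ∩ Q ⊂ C := by
    refine ⟨inter_subset_left, fun hsub => ?_⟩
    obtain ⟨x, hxC, hxP⟩ := hCP
    exact Set.disjoint_left.mp hdisjPQ hxP (hsub hxC).2
  have h5 : mrank M (C ∩ P) = (C ∩ P).ncard := (hproper _ hCPprop).mrank_self
  have h6 : mrank M (C ∩ Q) = (C ∩ Q).ncard := (hproper _ hCQprop).mrank_self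
  have hpart : (C ∩ P).ncard + (C ∩ Q).ncard = C.ncard := by
    rw [← ncard_union_eq (hdisjPQ.mono inter_subset_right inter_subset_right), hunion]
  rw [hunion, h5, h6] at hadd
  omega

end PairSep

section Building

set_option linter.unusedSectionVars false

variable [Fintype α] {M : Matroid α} {B 𝒢 : Set (Set α)} {A A' F G G' X Y : Set α} {e : α}

lemma exists_maxB_superset (hB : IsBuildingSet M B) (hX : X ∈ B) :
    ∃ G ∈ maxB B, X ⊆ G := by
  obtain ⟨G, hG, hGmax⟩ := Set.Finite.exists_maximalFor id {Y ∈ B | X ⊆ Y}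
    (Set.toFinite _) ⟨X, hX, Subset.rfl⟩
  exact ⟨G, ⟨hG.1, fun Z hZ hGZ => subset_antisymm hGZ (hGmax ⟨hZ, hG.2.trans hGZ⟩ hGZ)⟩, hG.2⟩

lemma maxB_disjoint (hB : IsBuildingSet M B) (hG : G ∈ maxB B) (hG' : G' ∈ maxB B)
    (hne : G ≠ G') : Disjoint G G' := by
  by_contra h
  obtain ⟨e, he, he'⟩ := Set.not_disjoint_iff.mp h
  have hJ := hB.2.2 G hG.1 G' hG'.1 ⟨e, he, he'⟩
  have hEE : G ∪ G' ⊆ M.E :=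
    union_subset (hB.1 G hG.1).1.subset_ground (hB.1 G' hG'.1).1.subset_ground
  have h1 : G ⊆ M.closure (G ∪ G') :=
    (subset_union_left).trans (M.subset_closure _ hEE)
  have h2 : G = M.closure (G ∪ G') := hG.2 _ hJ h1
  have h3 : G' ⊆ G := h2 ▸ ((subset_union_right).trans (M.subset_closure _ hEE))
  exact hne (hG'.2 G hG.1 h3).symm

lemma IsAtomFlat.mem_building (hM : MLoopless M) (hB : IsBuildingSet M B)
    (hA : IsAtomFlat M A) : A ∈ B :=
  hB.2.1 A hA.1 hA.nonempty (hA.mconnected hM)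

lemma sUnion_maxB (hM : MLoopless M) (hB : IsBuildingSet M B) : ⋃₀ maxB B = M.E := by
  refine subset_antisymm (sUnion_subset fun G hG => (hB.1 G hG.1).1.subset_ground) ?_
  intro e he
  have hA := isAtomFlat_closure_singleton hM he
  obtain ⟨G, hG, hsub⟩ := exists_maxB_superset hB (hA.mem_building hM hB)
  exact ⟨G, hG, hsub (M.mem_closure_self e he)⟩

lemma conn_flat_unique (hM : MLoopless M) (hB : IsBuildingSet M B) (hF : M.IsFlat F)
    (hFne : F.Nonempty) (hFconn : MConnected (M.restrict F)) (hG : G ∈ maxB B)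
    (hG' : G' ∈ maxB B) (h1 : (F ∩ G).Nonempty) (h2 : (F ∩ G').Nonempty) : G = G' := by
  have hFB := hB.2.1 F hF hFne hFconn
  obtain ⟨G₀, hG₀, hsub⟩ := exists_maxB_superset hB hFB
  have e1 : G₀ = G := by
    by_contra h
    obtain ⟨x, hxF, hxG⟩ := h1
    exact Set.disjoint_left.mp (maxB_disjoint hB hG₀ hG h) (hsub hxF) hxG
  have e2 : G₀ = G' := by
    by_contra h
    obtain ⟨x, hxF, hxG⟩ := h2
    exact Set.disjoint_left.mp (maxB_disjoint hB hG₀ hG' h) (hsub hxF) hxG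
  exact e1 ▸ e2

lemma maxB_peel (hM : MLoopless M) (hB : IsBuildingSet M B) (h𝒢 : 𝒢 ⊆ maxB B)
    (hG : G ∈ 𝒢) :
    mrank M (⋃₀ 𝒢) = mrank M G + mrank M (⋃₀ (𝒢 \ {G})) := by
  have hcover : ⋃₀ 𝒢 = G ∪ ⋃₀ (𝒢 \ {G}) := by
    rw [← sUnion_insert, insert_diff_singleton, insert_eq_of_mem hG]
  have hdisj : Disjoint G (⋃₀ (𝒢 \ {G})) := by
    rw [disjoint_sUnion_right]
    rintro t ⟨ht, htne⟩
    exact maxB_disjoint hB (h𝒢 hG) (h𝒢 ht) (fun h => htne (h ▸ rfl))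
  rw [hcover]
  refine le_antisymm (mrank_union_le M _ _) ?_
  by_contra hlt
  push_neg at hlt
  obtain ⟨F, hF, hFne, hFconn, hFG, hFU⟩ := exists_conn_flat hM hdisj hlt
  obtain ⟨x, hxF, t, ht, hxt⟩ := hFU
  have := conn_flat_unique hM hB hF hFne hFconn (h𝒢 hG) (h𝒢 ht.1) hFG ⟨x, hxF, hxt⟩
  exact ht.2 (this ▸ rfl)

lemma maxB_lower (hM : MLoopless M) (hB : IsBuildingSet M B) (h𝒢 : 𝒢 ⊆ maxB B) :
    𝒢.ncard ≤ mrank M (⋃₀ 𝒢) := by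
  refine Set.Finite.induction_on (motive := fun 𝒢 _ => 𝒢 ⊆ maxB B → 𝒢.ncard ≤ mrank M (⋃₀ 𝒢))
    𝒢 (Set.toFinite 𝒢) (fun _ => by simp) ?_ h𝒢
  intro G 𝒢' hGnot hfin IH hsub
  have hpeel := maxB_peel hM hB hsub (mem_insert G 𝒢')
  rw [insert_diff_self_of_notMem hGnot] at hpeel
  have h1 : 1 ≤ mrank M G := by
    obtain ⟨hGflat, hGne⟩ := hB.1 G (hsub (mem_insert G 𝒢')).1
    exact one_le_mrank_nonempty hM hGne hGflat.subset_ground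
  have h2 := IH ((subset_insert G 𝒢').trans hsub)
  rw [ncard_insert_of_notMem hGnot (Set.toFinite _), hpeel]
  omega

lemma maxB_upper (hM : MLoopless M) (h1 : ∀ G ∈ 𝒢, mrank M G ≤ 1) :
    mrank M (⋃₀ 𝒢) ≤ 𝒢.ncard := by
  refine Set.Finite.induction_on
    (motive := fun 𝒢 _ => (∀ G ∈ 𝒢, mrank M G ≤ 1) → mrank M (⋃₀ 𝒢) ≤ 𝒢.ncard)
    𝒢 (Set.toFinite 𝒢) (fun _ => by simp [mrank_empty]) ?_ h1
  intro G 𝒢' hGnot hfin IH hsub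
  rw [sUnion_insert, ncard_insert_of_notMem hGnot (Set.toFinite _)]
  have := mrank_union_le M G (⋃₀ 𝒢')
  have h2 := IH (fun G' hG' => hsub G' (mem_insert_of_mem _ hG'))
  have h3 := hsub G (mem_insert G 𝒢')
  omega

end Building

section Key

set_option linter.unusedSectionVars false

variable [Fintype α] {M : Matroid α} {B : Set (Set α)} {A F G G' X Y : Set α} {e : α}

lemma building_key (hM : MLoopless M) (hB : IsBuildingSet M B)
    (hcard : (maxB B).ncard + 1 = mrank M M.E) :
    (∀ X ∈ B \ maxB B, IsAtomFlat M X ∧ ∀ G ∈ maxB B, X ⊆ G → mrank M G = 2) ∧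
    (∀ G ∈ maxB B, ∀ G' ∈ maxB B, 2 ≤ mrank M G → 2 ≤ mrank M G' → G = G') ∧
    (∃ X, X ∈ B \ maxB B) := by
  have hEeq : ⋃₀ maxB B = M.E := sUnion_maxB hM hB
  have hrE : mrank M (⋃₀ maxB B) = (maxB B).ncard + 1 := by rw [hEeq, ← hcard]
  have hle2 : ∀ G ∈ maxB B, mrank M G ≤ 2 := by
    intro G hG
    have h1 := maxB_peel hM hB (Subset.refl (maxB B)) hG
    have h2 := maxB_lower hM hB (diff_subset (s := maxB B) (t := {G}))
    have h3 : (maxB B \ {G}).ncard + 1 = (maxB B).ncard :=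
      ncard_diff_singleton_add_one hG (Set.toFinite _)
    omega
  have huniq : ∀ G ∈ maxB B, ∀ G' ∈ maxB B, 2 ≤ mrank M G → 2 ≤ mrank M G' → G = G' := by
    intro G hG G' hG' h2 h2'
    by_contra hne
    have p1 := maxB_peel hM hB (Subset.refl (maxB B)) hG
    have hG'mem : G' ∈ maxB B \ {G} := ⟨hG', fun h => hne (mem_singleton_iff.mp h).symm⟩
    have p2 := maxB_peel hM hB (diff_subset (s := maxB B) (t := {G})) hG'mem
    have l3 := maxB_lower hM hB ((diff_subset (s := maxB B \ {G}) (t := {G'})).trans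
      (diff_subset (s := maxB B) (t := {G})))
    have c1 : ((maxB B \ {G}) \ {G'}).ncard + 1 = (maxB B \ {G}).ncard :=
      ncard_diff_singleton_add_one hG'mem (Set.toFinite _)
    have c2 : (maxB B \ {G}).ncard + 1 = (maxB B).ncard :=
      ncard_diff_singleton_add_one hG (Set.toFinite _)
    omega
  have hXfacts : ∀ X ∈ B \ maxB B, IsAtomFlat M X ∧ ∀ G ∈ maxB B, X ⊆ G → mrank M G = 2 := by
    rintro X ⟨hXB, hXnm⟩
    obtain ⟨G, hG, hXG⟩ := exists_maxB_superset hB hXB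
    obtain ⟨hXflat, hXne⟩ := hB.1 X hXB
    have hXneG : X ≠ G := fun h => hXnm (h ▸ hG)
    have hlt : mrank M X < mrank M G := by
      by_contra hle
      push_neg at hle
      exact hXneG (flat_eq_of_subset_of_mrank_le hXflat (hB.1 G hG.1).1 hXG hle)
    have h1 : 1 ≤ mrank M X := one_le_mrank_nonempty hM hXne hXflat.subset_ground
    have hG2 : mrank M G ≤ 2 := hle2 G hG
    refine ⟨⟨hXflat, by omega⟩, ?_⟩
    intro G' hG' hXG'
    have hGG' : G = G' := by
      by_contra h
      obtain ⟨x, hx⟩ := hXne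
      exact Set.disjoint_left.mp (maxB_disjoint hB hG hG' h) (hXG hx) (hXG' hx)
    rw [← hGG']
    omega
  refine ⟨hXfacts, huniq, ?_⟩
  have hex2 : ∃ G ∈ maxB B, 2 ≤ mrank M G := by
    by_contra h
    push_neg at h
    have hall1 : ∀ G ∈ maxB B, mrank M G ≤ 1 := fun G hG => by
      have := h G hG; omega
    have := maxB_upper hM hall1
    omega
  obtain ⟨G, hG, hr2⟩ := hex2
  obtain ⟨e, he⟩ := (hB.1 G hG.1).2
  have heE : e ∈ M.E := (hB.1 G hG.1).1.subset_ground he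
  have hA := isAtomFlat_closure_singleton hM heE
  have hAB := hA.mem_building hM hB
  have hAG : M.closure {e} ⊆ G := by
    have h1 := M.closure_subset_closure (singleton_subset_iff.mpr he)
    rwa [(hB.1 G hG.1).1.closure] at h1
  refine ⟨M.closure {e}, hAB, fun hmax => ?_⟩
  have heq := hmax.2 G hG.1 hAG
  rw [← heq] at hr2
  rw [hA.2] at hr2
  omega

end Key

section Nested

set_option linter.unusedSectionVars false

variable [Fintype α] {M : Matroid α} {B N : Set (Set α)} {A F G G' X Y : Set α} {e : α}

lemma closure_pair_eq (hM : MLoopless M) (hXa : IsAtomFlat M X) (hYa : IsAtomFlat M Y)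
    (hne : X ≠ Y) (hG : M.IsFlat G) (hrG : mrank M G = 2) (hXG : X ⊆ G) (hYG : Y ⊆ G) :
    M.closure (X ∪ Y) = G := by
  have hdisj := hXa.disjoint_of_ne hM hYa hne
  obtain ⟨x, hx⟩ := hXa.nonempty
  obtain ⟨y, hy⟩ := hYa.nonempty
  have hxX : X = M.closure {x} := hXa.eq_closure_singleton hM hx
  have hyE : y ∈ M.E := hYa.1.subset_ground hy
  have hynX : y ∉ X := Set.disjoint_right.mp hdisj hy
  have hxy : M.Indep ({x, y} : Set α) := by
    rw [pair_comm]
    have h1 : M.Indep {x} := hM x (hXa.1.subset_ground hx)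
    have hyx : y ∉ ({x} : Set α) := by
      simp only [mem_singleton_iff]
      rintro rfl
      exact hynX hx
    refine (h1.insert_indep_iff_of_notMem hyx).mpr ⟨hyE, ?_⟩
    rw [← hxX]
    exact hynX
  have hxyne : x ≠ y := fun h => hynX (h ▸ hx)
  refine flat_eq_of_subset_of_mrank_le (flat_closure M _) hG ?_ ?_
  · have := M.closure_subset_closure (union_subset hXG hYG)
    rwa [hG.closure] at this
  · rw [mrank_closure_eq, hrG]
    have h2 := ncard_le_mrank (union_subset_union (singleton_subset_iff.mpr hx)
      (singleton_subset_iff.mpr hy)) (by rwa [singleton_union] : M.Indep ({x} ∪ {y}))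
    rwa [singleton_union, ncard_pair hxyne] at h2

lemma two_nonmax_false (hM : MLoopless M) (hB : IsBuildingSet M B)
    (hcard : (maxB B).ncard + 1 = mrank M M.E)
    (hXm : X ∈ B \ maxB B) (hYm : Y ∈ B \ maxB B) (hne : X ≠ Y)
    (hXN : X ∈ N) (hYN : Y ∈ N) (hN : IsNested M B N) : False := by
  obtain ⟨hfacts, huniq, -⟩ := building_key hM hB hcard
  obtain ⟨hXa, hXr⟩ := hfacts X hXm
  obtain ⟨hYa, hYr⟩ := hfacts Y hYm
  obtain ⟨G, hG, hXG⟩ := exists_maxB_superset hB hXm.1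
  obtain ⟨G', hG', hYG'⟩ := exists_maxB_superset hB hYm.1
  have hrG : mrank M G = 2 := hXr G hG hXG
  have hrG' : mrank M G' = 2 := hYr G' hG' hYG'
  have hGG' : G = G' := huniq G hG G' hG' hrG.ge hrG'.ge
  have hYG : Y ⊆ G := hGG' ▸ hYG'
  have hclu : M.closure (X ∪ Y) = G := closure_pair_eq hM hXa hYa hne (hB.1 G hG.1).1 hrG hXG hYG
  have hdisj := hXa.disjoint_of_ne hM hYa hne
  obtain ⟨x0, hx0⟩ := hXa.nonempty
  obtain ⟨y0, hy0⟩ := hYa.nonempty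
  have hpair : ({X, Y} : Set (Set α)).Pairwise Incomp := by
    have hIncXY : Incomp X Y :=
      ⟨fun h => Set.disjoint_right.mp hdisj (h hx0) hx0,
       fun h => Set.disjoint_left.mp hdisj (h hy0) hy0⟩
    intro u hu v hv huv
    rcases hu with rfl | hu <;> rcases hv with rfl | hv
    · exact absurd rfl huv
    · rw [mem_singleton_iff] at hv; subst hv; exact hIncXY
    · rw [mem_singleton_iff] at hu; subst hu; exact ⟨hIncXY.2, hIncXY.1⟩
    · rw [mem_singleton_iff] at hu hv; subst hu; subst hv; exact absurd rfl huv
  refine hN.2.2 {X, Y} ?_ ⟨X, by simp, Y, by simp, hne⟩ hpair ?_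
  · rintro Z (rfl | hZ)
    · exact hXN
    · rw [mem_singleton_iff] at hZ; exact hZ ▸ hYN
  · rw [sUnion_pair, hclu]
    exact hG.1

lemma nested_insert_nonmax (hM : MLoopless M) (hB : IsBuildingSet M B)
    (hX : X ∈ B \ maxB B) : IsNested M B (insert X (maxB B)) := by
  refine ⟨?_, subset_insert _ _, ?_⟩
  · rintro Y (rfl | hY)
    · exact hX.1
    · exact hY.1
  · intro S hS hSnt hSpair hmem
    have hSB : ∀ Y ∈ S, Y ∈ B := by
      intro Y hY
      rcases hS hY with rfl | h
      · exact hX.1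
      · exact h.1
    have hSE : ⋃₀ S ⊆ M.E := sUnion_subset fun Y hY => (hB.1 Y (hSB Y hY)).1.subset_ground
    obtain ⟨G, hG, hFsub⟩ := exists_maxB_superset hB hmem
    have hYsub : ∀ Y ∈ S, Y ⊆ G := fun Y hY =>
      (subset_sUnion_of_mem hY).trans ((M.subset_closure _ hSE).trans hFsub)
    have hcases : ∀ Y ∈ S, Y = X ∨ Y = G := by
      intro Y hY
      rcases hS hY with rfl | hYmax
      · exact Or.inl rfl
      · exact Or.inr (hYmax.2 G hG.1 (hYsub Y hY))
    obtain ⟨a, ha, b, hb, hab⟩ := hSnt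
    rcases hcases a ha with rfl | rfl <;> rcases hcases b hb with rfl | rfl
    · exact hab rfl
    · exact (hSpair ha hb hab).1 (hYsub _ ha)
    · exact (hSpair ha hb hab).2 (hYsub _ hb)
    · exact hab rfl

lemma insert_maxNested (hM : MLoopless M) (hB : IsBuildingSet M B)
    (hcard : (maxB B).ncard + 1 = mrank M M.E)
    (hX : X ∈ B \ maxB B) : IsMaxNested M B (insert X (maxB B)) := by
  refine ⟨nested_insert_nonmax hM hB hX, fun N' hN' hsub => ?_⟩
  refine subset_antisymm ?_ hsub
  intro Y hY
  by_contra hYnot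
  have hYB : Y ∈ B := hN'.1 hY
  have hYnm : Y ∉ maxB B := fun h => hYnot (mem_insert_of_mem _ h)
  have hYX : X ≠ Y := fun h => hYnot (h ▸ mem_insert _ _)
  exact two_nonmax_false hM hB hcard hX ⟨hYB, hYnm⟩ hYX
    (hsub (mem_insert _ _)) hY hN'

end Nested

/-- if `|max(B)| = rank(M) - 1`, then the inclusion-maximal nested sets
are exactly the sets `max(B) ∪ {X}` with `X ∈ B ∖ max(B)`, and every such `X` is an
atom of `M`. -/
theorem building_corank_one {α : Type*} [Fintype α] [LinearOrder α]
    (M : Matroid α) (hM : MLoopless M)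
    (B : Set (Set α)) (hB : IsBuildingSet M B)
    (hcard : (maxB B).ncard + 1 = mrank M M.E) :
    (∀ N, IsMaxNested M B N ↔ ∃ X ∈ B \ maxB B, N = insert X (maxB B)) ∧
    (∀ X ∈ B \ maxB B, IsAtomFlat M X) := by
  obtain ⟨hfacts, huniq, hexnm⟩ := building_key hM hB hcard
  refine ⟨?_, fun X hX => (hfacts X hX).1⟩
  intro N
  constructor
  · intro hN
    by_cases hex : ∃ X ∈ N, X ∉ maxB B
    · obtain ⟨X, hXN, hXnm⟩ := hex
      have hXB : X ∈ B := hN.1.1 hXN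
      refine ⟨X, ⟨hXB, hXnm⟩, ?_⟩
      refine subset_antisymm ?_ ?_
      · intro Y hY
        by_cases hYm : Y ∈ maxB B
        · exact mem_insert_of_mem _ hYm
        · have hYX : Y = X := by
            by_contra hne
            exact two_nonmax_false hM hB hcard ⟨hN.1.1 hY, hYm⟩ ⟨hXB, hXnm⟩ hne hY hXN hN.1
          exact hYX ▸ mem_insert _ _
      · rintro Y (rfl | h)
        · exact hXN
        · exact hN.1.2.1 h
    · push_neg at hex
      have hNeq : N = maxB B := subset_antisymm (fun Y hY => hex Y hY) hN.1.2.1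
      obtain ⟨X, hX⟩ := hexnm
      have h2 := hN.2 _ (nested_insert_nonmax hM hB hX)
        (by rw [hNeq]; exact subset_insert _ _)
      have h3 : X ∈ N := h2 ▸ mem_insert X _
      rw [hNeq] at h3
      exact absurd h3 hX.2
  · rintro ⟨X, hX, rfl⟩
    exact insert_maxNested hM hB hcard hX
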